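/- arXiv:2010.15385 — 3 statements merged into one kernel-verified Lean document; each statement's English description precedes it below -/
import Mathlib

section
/- Under the conditions tr J < 0, det J > 0, d1, d2 > 0, and d2·J11 + d1·J22 > 2√(d1·d2·det J), the quadratic d1d2 t² - (d2J11 + d1J22)t + det J in t = κ² has two positive real roots t± = [(d2J11 + d1J22) ± √((d2J11 + d1J22)² - 4d1d2 det J)]/(2d1d2), and for every t strictly between t- and t+ the matrix J - tD has a positive eigenvalue. -/
/-- Under the Turing instability conditions, the quadratic
`d₁d₂t² - (d₂J₁₁ + d₁J₂₂)t + det J` has two positive real roots `t₋ < t₊`, and for every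
`t` strictly between them the matrix `J - tD` has a positive (real) eigenvalue. -/
theorem turing_band_positive_eigenvalue
    (J₁₁ J₁₂ J₂₁ J₂₂ d₁ d₂ : ℝ)
    (htr : J₁₁ + J₂₂ < 0) (hdet : 0 < J₁₁*J₂₂ - J₁₂*J₂₁)
    (hd₁ : 0 < d₁) (hd₂ : 0 < d₂)
    (hT : d₂*J₁₁ + d₁*J₂₂ > 2*Real.sqrt (d₁*d₂*(J₁₁*J₂₂ - J₁₂*J₂₁)))
    (tm tp : ℝ)
    (htm : tm = ((d₂*J₁₁ + d₁*J₂₂)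
        - Real.sqrt ((d₂*J₁₁ + d₁*J₂₂)^2 - 4*d₁*d₂*(J₁₁*J₂₂ - J₁₂*J₂₁)))/(2*d₁*d₂))
    (htp : tp = ((d₂*J₁₁ + d₁*J₂₂)
        + Real.sqrt ((d₂*J₁₁ + d₁*J₂₂)^2 - 4*d₁*d₂*(J₁₁*J₂₂ - J₁₂*J₂₁)))/(2*d₁*d₂)) :
    0 < tm ∧ tm < tp ∧
    (d₁*d₂*tm^2 - (d₂*J₁₁ + d₁*J₂₂)*tm + (J₁₁*J₂₂ - J₁₂*J₂₁) = 0) ∧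
    (d₁*d₂*tp^2 - (d₂*J₁₁ + d₁*J₂₂)*tp + (J₁₁*J₂₂ - J₁₂*J₂₁) = 0) ∧
    ∀ t : ℝ, tm < t → t < tp →
      ∃ lam : ℝ, 0 < lam ∧
        (J₁₁ - t*d₁ - lam)*(J₂₂ - t*d₂ - lam) - J₁₂*J₂₁ = 0 := by
  set S := d₂*J₁₁ + d₁*J₂₂ with hS
  set Δ := J₁₁*J₂₂ - J₁₂*J₂₁ with hΔ
  have hdd : 0 < d₁ * d₂ := mul_pos hd₁ hd₂
  have hx : 0 ≤ d₁*d₂*Δ := le_of_lt (mul_pos hdd hdet)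
  have hsq : (Real.sqrt (d₁*d₂*Δ))^2 = d₁*d₂*Δ := Real.sq_sqrt hx
  have hsnn : 0 ≤ Real.sqrt (d₁*d₂*Δ) := Real.sqrt_nonneg _
  have hSpos : 0 < S := lt_of_le_of_lt (by positivity) hT
  have hDisc : 0 < S^2 - 4*d₁*d₂*Δ := by nlinarith [hsq, hsnn, hT]
  set s := Real.sqrt (S^2 - 4*d₁*d₂*Δ) with hs
  have hs2 : s^2 = S^2 - 4*d₁*d₂*Δ := Real.sq_sqrt (le_of_lt hDisc)
  have hspos : 0 < s := Real.sqrt_pos.mpr hDisc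
  have hsS : s < S := by nlinarith [hs2, hspos, hSpos]
  clear_value S Δ s
  have h2dd : (0:ℝ) < 2*d₁*d₂ := by positivity
  have h2dd' : (2*d₁*d₂ : ℝ) ≠ 0 := ne_of_gt h2dd
  have htm0 : 0 < tm := by rw [htm]; exact div_pos (by linarith) h2dd
  have htmtp : tm < tp := by
    rw [htm, htp]; exact (div_lt_div_iff_of_pos_right h2dd).mpr (by linarith)
  have key : 2*(d₁*d₂)*tm = S - s := by rw [htm]; field_simp
  have keyp : 2*(d₁*d₂)*tp = S + s := by rw [htp]; field_simp
  have hsum : d₁*d₂*(tm+tp) = S := by linear_combination key/2 + keyp/2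
  have hprod : d₁*d₂*(tm*tp) = Δ := by
    have h4 : 4*(d₁*d₂)*(d₁*d₂*(tm*tp) - Δ) = 0 := by
      linear_combination 2*(d₁*d₂)*tp*key + (S-s)*keyp - hs2
    have h5 := (mul_eq_zero.mp h4).resolve_left (by positivity)
    linarith
  have hrootm : d₁*d₂*tm^2 - S*tm + Δ = 0 := by
    linear_combination tm*hsum - hprod
  have hrootp : d₁*d₂*tp^2 - S*tp + Δ = 0 := by
    linear_combination tp*hsum - hprod
  refine ⟨htm0, htmtp, hrootm, hrootp, ?_⟩
  intro t ht1 ht2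
  have hid : (J₁₁ - t*d₁)*(J₂₂ - t*d₂) - J₁₂*J₂₁ = -(d₁*d₂)*((t-tm)*(tp-t)) := by
    linear_combination t*hsum - hprod + t*hS - hΔ
  have hdetneg : (J₁₁ - t*d₁)*(J₂₂ - t*d₂) - J₁₂*J₂₁ < 0 := by
    rw [hid]
    have := mul_pos hdd (mul_pos (sub_pos.mpr ht1) (sub_pos.mpr ht2))
    linarith
  obtain ⟨a, ha⟩ : ∃ a, a = J₁₁ - t*d₁ := ⟨_, rfl⟩
  obtain ⟨b, hb⟩ : ∃ b, b = J₂₂ - t*d₂ := ⟨_, rfl⟩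
  rw [← ha, ← hb] at hdetneg ⊢
  have hD2 : 0 < (a+b)^2 - 4*(a*b - J₁₂*J₂₁) := by nlinarith [hdetneg, sq_nonneg (a-b)]
  obtain ⟨r, hr⟩ : ∃ r, r = Real.sqrt ((a+b)^2 - 4*(a*b - J₁₂*J₂₁)) := ⟨_, rfl⟩
  have hr2 : r^2 = (a+b)^2 - 4*(a*b - J₁₂*J₂₁) := by rw [hr]; exact Real.sq_sqrt hD2.le
  have hrnn : 0 ≤ r := by rw [hr]; exact Real.sqrt_nonneg _
  have h1 : (a+b)^2 < r^2 := by linarith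
  have h3 : |a+b| < r := abs_lt_of_sq_lt_sq (by simpa [sq_abs] using h1) hrnn
  have hrgt : -(a+b) < r := lt_of_le_of_lt (neg_le_abs _) h3
  refine ⟨((a+b) + r)/2, by linarith, ?_⟩
  linear_combination hr2/4
end

section
/- Let g1, g2 > 0 with g2 > g1, h ≠ 0, g = g1 + 2g2, and μ > 0, and let ρh+ = (|h| + √(h² + 4gμ))/(2g). If μ < h²(2g1 + g2)/(g1 - g2)², then λ2 := μ - 3g1·ρh+² - |h|ρh+ < 0; i.e. the hexagonal pattern H with amplitude ρh+ is linearly stable under the condition μ < μ_{h2} = h²(2g1+g2)/(g1-g2)². -/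
/-! Eliminating `μ` through `gρ² - |h|ρ - μ = 0`, of which `ρ = ρₕ⁺` is the larger root, gives
`λ₂ = 2ρ((g₂ - g₁)ρ - |h|)`. So stability means `ρ < r := |h|/(g₂ - g₁)`; as the smaller root is
`≤ 0 ≤ r`, this holds exactly when the quadratic is positive at `r`, where it takes the value
`h²(2g₁ + g₂)/(g₁ - g₂)² - μ`. -/

/-- The larger root of `a x² - b x - c` when `a > 0`; `ρₕ⁺ = plusRoot g |h| μ`. -/
noncomputable def plusRoot (a b c : ℝ) : ℝ := (b + √(b ^ 2 + 4 * a * c)) / (2 * a)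

lemma plusRoot_isRoot {a b c : ℝ} (ha : a ≠ 0) (hd : 0 ≤ b ^ 2 + 4 * a * c) :
    a * plusRoot a b c ^ 2 - b * plusRoot a b c - c = 0 := by
  have hs := Real.sq_sqrt hd
  unfold plusRoot
  set s := √(b ^ 2 + 4 * a * c)
  field_simp
  linear_combination hs

lemma plusRoot_pos {a b c : ℝ} (ha : 0 < a) (hc : 0 < c) : 0 < plusRoot a b c := by
  have hb : |b| < √(b ^ 2 + 4 * a * c) := by
    rw [← Real.sqrt_sq_eq_abs]
    exact Real.sqrt_lt_sqrt (sq_nonneg b) (by nlinarith)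
  exact div_pos (by linarith [neg_abs_le b]) (by positivity)

lemma plusRoot_lt_of_pos {a b c r : ℝ} (ha : 0 < a) (hc : 0 ≤ c) (hr : 0 ≤ r)
    (hq : 0 < a * r ^ 2 - b * r - c) : plusRoot a b c < r := by
  have hvertex : b < 2 * a * r := by
    by_contra! hb
    nlinarith [mul_le_mul_of_nonneg_left hb hr]
  have hsqrt : √(b ^ 2 + 4 * a * c) < 2 * a * r - b :=
    (Real.sqrt_lt' (by linarith)).2 (by nlinarith)
  rw [plusRoot, div_lt_iff₀ (by positivity)]
  linarith

theorem hexagon_plus_stable_general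
    (g₁ g₂ h μ : ℝ)
    (hg₁ : 0 < g₁) (hg : g₁ < g₂) (hμ : 0 < μ)
    (g ρ : ℝ) (hgdef : g = g₁ + 2*g₂)
    (hρ : ρ = (|h| + Real.sqrt (h^2 + 4*g*μ))/(2*g))
    (hμ2 : μ < h^2*(2*g₁ + g₂)/(g₁ - g₂)^2) :
    μ - 3*g₁*ρ^2 - |h| *ρ < 0 := by
  have hg0 : 0 < g := by linarith
  have hgap : 0 < g₂ - g₁ := sub_pos.2 hg
  replace hρ : ρ = plusRoot g |h| μ := by rw [hρ, plusRoot, sq_abs]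
  have hroot : g * ρ ^ 2 - |h| * ρ - μ = 0 := hρ ▸ plusRoot_isRoot hg0.ne' (by positivity)
  have hρpos : 0 < ρ := hρ ▸ plusRoot_pos hg0 hμ
  have hvalue : g * (|h| / (g₂ - g₁)) ^ 2 - |h| * (|h| / (g₂ - g₁)) - μ
      = h ^ 2 * (2 * g₁ + g₂) / (g₁ - g₂) ^ 2 - μ := by
    have hne : g₁ - g₂ ≠ 0 := by linarith
    rw [hgdef, ← sq_abs h]
    field_simp
    ring
  have hbelow : (g₂ - g₁) * ρ < |h| := by
    have := plusRoot_lt_of_pos hg0 hμ.le (by positivity) (hvalue ▸ sub_pos.2 hμ2)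
    rwa [← hρ, lt_div_iff₀ hgap, mul_comm] at this
  calc μ - 3 * g₁ * ρ ^ 2 - |h| * ρ = 2 * ρ * ((g₂ - g₁) * ρ - |h|) := by
        rw [hgdef] at hroot; linear_combination -hroot
    _ < 0 := mul_neg_of_pos_of_neg (by positivity) (by linarith)

/-- Hexagon stability: with `0 < g₁ < g₂`, `h ≠ 0`, `g = g₁ + 2g₂`, `μ > 0` and
`ρₕ⁺ = (|h| + √(h² + 4gμ))/(2g)`, if `μ < h²(2g₁ + g₂)/(g₁ - g₂)²` then
`λ₂ = μ - 3g₁ρₕ⁺² - |h|ρₕ⁺ < 0`. -/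
theorem hexagon_plus_stable
    (g₁ g₂ h μ : ℝ)
    (hg₁ : 0 < g₁) (hg₂ : 0 < g₂) (hg : g₁ < g₂) (hh : h ≠ 0) (hμ : 0 < μ)
    (g ρ : ℝ) (hgdef : g = g₁ + 2*g₂)
    (hρ : ρ = (|h| + Real.sqrt (h^2 + 4*g*μ))/(2*g))
    (hμ2 : μ < h^2*(2*g₁ + g₂)/(g₁ - g₂)^2) :
    μ - 3*g₁*ρ^2 - |h| *ρ < 0 :=
  hexagon_plus_stable_general g₁ g₂ h μ hg₁ hg hμ g ρ hgdef hρ hμ2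
end

section
/- Let g = g1 + 2g2 > 0, h ≠ 0, -h²/(4g) < μ < 0, and ρh- = (|h| - √(h² + 4gμ))/(2g). Then ρh- > 0, it satisfies μ + |h|ρh- - g·ρh-² = 0, and λ1 := μ - 3g·ρh-² + 2|h|ρh- = (-4μg - h² + |h|√(h² + 4μg))/(2g) > 0; hence the hexagonal state with amplitude ρh- is linearly unstable. -/
/-- Instability of the hexagonal branch `ρₕ⁻`: with `g = g₁ + 2g₂ > 0`, `h ≠ 0`,
`-h²/(4g) < μ < 0`, the amplitude `ρₕ⁻ = (|h| - √(h² + 4gμ))/(2g)` is positive,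
stationary, and the eigenvalue `λ₁ = μ - 3gρₕ⁻² + 2|h|ρₕ⁻` equals
`(-4μg - h² + |h|√(h² + 4μg))/(2g) > 0`: the state is linearly unstable. -/
theorem hexagon_minus_unstable
    (g₁ g₂ h μ : ℝ) (g : ℝ) (hgdef : g = g₁ + 2*g₂) (hg : 0 < g)
    (hh : h ≠ 0) (hμ₁ : -h^2/(4*g) < μ) (hμ₂ : μ < 0)
    (ρ : ℝ) (hρ : ρ = (|h| - Real.sqrt (h^2 + 4*g*μ))/(2*g)) :
    0 < ρ ∧
    μ + |h| *ρ - g*ρ^2 = 0 ∧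
    μ - 3*g*ρ^2 + 2* |h| *ρ
      = (-(4*μ*g) - h^2 + |h| *Real.sqrt (h^2 + 4*μ*g))/(2*g) ∧
    0 < μ - 3*g*ρ^2 + 2* |h| *ρ := by
  set s := Real.sqrt (h^2 + 4*g*μ) with hs
  have hcomm : h^2 + 4*μ*g = h^2 + 4*g*μ := by ring
  have hpos : 0 < h^2 + 4*g*μ := by
    have := (div_lt_iff₀ (by positivity : (0:ℝ) < 4*g)).mp hμ₁
    nlinarith
  have hs0 : 0 < s := Real.sqrt_pos.mpr hpos
  have hsq : s^2 = h^2 + 4*g*μ := Real.sq_sqrt hpos.le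
  have hslt : s < |h| := by
    have h2 : s^2 < |h|^2 := by rw [hsq, sq_abs]; nlinarith
    have := abs_nonneg h
    nlinarith
  have hρpos : 0 < ρ := by
    rw [hρ]
    apply div_pos (by linarith) (by linarith)
  have hg2 : (2*g) ≠ 0 := by positivity
  have hρeq : 2*g*ρ = |h| - s := by
    rw [hρ]; field_simp
  refine ⟨hρpos, ?_, ?_, ?_⟩
  · have habs : |h|^2 = h^2 := sq_abs h
    nlinarith [hρeq, hsq]
  · rw [hcomm]
    rw [eq_div_iff hg2]
    have habs : |h|^2 = h^2 := sq_abs h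
    nlinarith [hρeq, hsq]
  · have hnum : 0 < |h| * s - s^2 := by nlinarith
    have habs : |h|^2 = h^2 := sq_abs h
    nlinarith [hρeq, hsq]
end
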